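/- arXiv:2406.14868 — 4 statements merged into one kernel-verified Lean document; each statement's English description precedes it below -/
import Mathlib

section
/- For γ ∈ (0,1) and integers 0 ≤ t < T, the discount function φ(t,T) = γ^t · (1-γ^{T-t})/(1-γ^T) is strictly decreasing in t, i.e., if 0 ≤ t < t' < T then φ(t',T) < φ(t,T). -/
noncomputable def phi (γ : ℝ) (t T : ℕ) : ℝ := γ ^ t * (1 - γ ^ (T - t)) / (1 - γ ^ T)

theorem phi_strict_anti (γ : ℝ) (hγ0 : 0 < γ) (hγ1 : γ < 1)
    (t t' T : ℕ) (htt' : t < t') (ht'T : t' < T) :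
    phi γ t' T < phi γ t T := by
  have key : ∀ s : ℕ, s ≤ T → γ ^ s * (1 - γ ^ (T - s)) = γ ^ s - γ ^ T := by
    intro s hs
    rw [mul_sub, mul_one, ← pow_add, Nat.add_sub_cancel' hs]
  have hT : 0 < T := lt_trans (Nat.zero_lt_of_lt htt') ht'T
  have hden : 0 < 1 - γ ^ T := by
    have : γ ^ T < 1 := pow_lt_one₀ hγ0.le hγ1 hT.ne'
    linarith
  have hnum : γ ^ t' < γ ^ t := pow_lt_pow_right_of_lt_one₀ hγ0 hγ1 htt'
  unfold phi
  rw [key t (by omega), key t' (by omega)]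
  exact div_lt_div_of_pos_right (by linarith) hden
end

section
/- Under the closed-form solution d*(x) = (1/Z) d_ref(x) exp(r(x)/β), the reward can be recovered as r(x) = β log(d*(x)/d_ref(x)) + β log Z, where Z is a constant independent of x. -/
open Real

lemma sum_mul_exp_pos {X : Type*} [Fintype X] [Nonempty X] {w : X → ℝ} (hw : ∀ x, 0 < w x)
    (f : X → ℝ) : 0 < ∑ x, w x * exp (f x) :=
  Finset.sum_pos (fun x _ => mul_pos (hw x) (exp_pos _)) Finset.univ_nonempty

lemma log_mul_exp_div_div {a s Z : ℝ} (ha : a ≠ 0) (hZ : Z ≠ 0) :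
    log (a * exp s / Z / a) = s - log Z := by
  rw [div_right_comm, mul_div_cancel_left₀ _ ha, log_div (exp_ne_zero s) hZ, log_exp]

theorem reward_recovery {X : Type*} [Fintype X]
    (dref : X → ℝ) (hpos : ∀ x, 0 < dref x)
    (r : X → ℝ) (β : ℝ) (hβ : 0 < β)
    (Z : ℝ) (hZ : Z = ∑ x, dref x * Real.exp (r x / β))
    (dstar : X → ℝ) (hdstar : ∀ x, dstar x = dref x * Real.exp (r x / β) / Z) :
    ∀ x, r x = β * Real.log (dstar x / dref x) + β * Real.log Z := by
  intro x
  have : Nonempty X := ⟨x⟩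
  have hZpos : 0 < Z := hZ ▸ sum_mul_exp_pos hpos _
  rw [hdstar x, log_mul_exp_div_div (hpos x).ne' hZpos.ne', mul_sub, mul_div_cancel₀ _ hβ.ne',
    sub_add_cancel]
end

section
/- For γ ∈ (0,1) and integers 0 ≤ t < T, let φ(t,T) = γ^t(1-γ^{T-t})/(1-γ^T); then for fixed t ≥ 1, φ(t,T) < φ(t,T+1) for all T > t. -/
theorem phi_strict_mono_in_T (γ : ℝ) (hγ0 : 0 < γ) (hγ1 : γ < 1)
    (t T : ℕ) (ht : 1 ≤ t) (htT : t < T) :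
    phi γ t T < phi γ t (T + 1) := by
  obtain ⟨k, rfl⟩ : ∃ k, T = t + (k + 1) := ⟨T - t - 1, by omega⟩
  have hpt : (0:ℝ) < γ ^ t := pow_pos hγ0 t
  have hγt : γ ^ t < 1 := pow_lt_one₀ hγ0.le hγ1 (by omega)
  have h1 : γ ^ (t + (k + 1)) < 1 := pow_lt_one₀ hγ0.le hγ1 (by omega)
  have h2 : γ ^ (t + (k + 1) + 1) < 1 := pow_lt_one₀ hγ0.le hγ1 (by omega)
  unfold phi
  rw [div_lt_div_iff₀ (by linarith) (by linarith)]
  have e1 : t + (k + 1) - t = k + 1 := by omega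
  have e2 : t + (k + 1) + 1 - t = k + 2 := by omega
  rw [e1, e2]
  have hpk : (0:ℝ) < γ ^ k := pow_pos hγ0 k
  have key : (0:ℝ) < γ ^ t * (γ ^ k * γ) * ((1 - γ) * (1 - γ ^ t)) :=
    mul_pos (mul_pos hpt (mul_pos hpk hγ0))
      (mul_pos (by linarith) (by linarith))
  have ea : γ ^ (t + (k + 1)) = γ ^ t * γ ^ k * γ := by ring
  have eb : γ ^ (t + (k + 1) + 1) = γ ^ t * γ ^ k * γ * γ := by ring
  have ec : γ ^ (k + 1) = γ ^ k * γ := by ring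
  have ed : γ ^ (k + 2) = γ ^ k * γ * γ := by ring
  rw [ea, eb, ec, ed]
  nlinarith [key]
end

section
/- If probability distributions d₁*, d₂* on a finite set X both satisfy dᵢ* = (1/Zᵢ) d_ref · exp(rᵢ/β) and induce the same Bradley-Terry preference probabilities σ(r₁(x) - r₁(y)) = σ(r₂(x) - r₂(y)) for all x, y ∈ X, then r₁ - r₂ is a constant function, and consequently d₁* = d₂*. -/
noncomputable def sigmoid (x : ℝ) : ℝ := 1 / (1 + Real.exp (-x))

lemma sigmoid_injective : Function.Injective sigmoid := by
  intro a b h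
  simpa [sigmoid] using h

lemma exists_sub_eq_const_of_sub_eq_sub {X : Type*} {f g : X → ℝ}
    (h : ∀ x y, f x - f y = g x - g y) : ∃ c : ℝ, ∀ x, f x - g x = c := by
  rcases isEmpty_or_nonempty X with _ | ⟨⟨x₀⟩⟩
  · exact ⟨0, isEmptyElim⟩
  · exact ⟨f x₀ - g x₀, fun x => by linarith [h x x₀]⟩

noncomputable def gibbs {X : Type*} [Fintype X] (dref r : X → ℝ) (β : ℝ) (x : X) : ℝ :=
  dref x * Real.exp (r x / β) / ∑ y, dref y * Real.exp (r y / β)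

lemma gibbs_eq_of_sub_eq_const {X : Type*} [Fintype X] (dref : X → ℝ) {r₁ r₂ : X → ℝ}
    (β : ℝ) {c : ℝ} (h : ∀ x, r₁ x - r₂ x = c) : gibbs dref r₁ β = gibbs dref r₂ β := by
  have hexp : ∀ x, Real.exp (r₁ x / β) = Real.exp (c / β) * Real.exp (r₂ x / β) := fun x => by
    rw [← Real.exp_add, ← h x, ← add_div, sub_add_cancel]
  funext x
  -- numerator and normalizer both pick up the factor `exp (c / β) ≠ 0`
  simp only [gibbs, hexp, mul_left_comm (dref _), ← Finset.mul_sum]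
  exact mul_div_mul_left _ _ (Real.exp_ne_zero _)

theorem bt_equivalent_rewards_same_occupancy_general {X : Type*} [Fintype X]
    (dref : X → ℝ)
    (r₁ r₂ : X → ℝ) (β : ℝ)
    (Z₁ Z₂ : ℝ)
    (hZ₁ : Z₁ = ∑ x, dref x * Real.exp (r₁ x / β))
    (hZ₂ : Z₂ = ∑ x, dref x * Real.exp (r₂ x / β))
    (d₁ d₂ : X → ℝ)
    (hd₁ : ∀ x, d₁ x = dref x * Real.exp (r₁ x / β) / Z₁)
    (hd₂ : ∀ x, d₂ x = dref x * Real.exp (r₂ x / β) / Z₂)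
    (hbt : ∀ x y, sigmoid (r₁ x - r₁ y) = sigmoid (r₂ x - r₂ y)) :
    (∃ c : ℝ, ∀ x, r₁ x - r₂ x = c) ∧ d₁ = d₂ := by
  obtain ⟨c, hc⟩ := exists_sub_eq_const_of_sub_eq_sub fun x y => sigmoid_injective (hbt x y)
  have hd₁' : d₁ = gibbs dref r₁ β := funext fun x => by rw [hd₁, hZ₁, gibbs]
  have hd₂' : d₂ = gibbs dref r₂ β := funext fun x => by rw [hd₂, hZ₂, gibbs]
  exact ⟨⟨c, hc⟩, by rw [hd₁', hd₂', gibbs_eq_of_sub_eq_const dref β hc]⟩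

theorem bt_equivalent_rewards_same_occupancy {X : Type*} [Fintype X]
    (dref : X → ℝ) (hpos : ∀ x, 0 < dref x)
    (r₁ r₂ : X → ℝ) (β : ℝ) (hβ : 0 < β)
    (Z₁ Z₂ : ℝ)
    (hZ₁ : Z₁ = ∑ x, dref x * Real.exp (r₁ x / β))
    (hZ₂ : Z₂ = ∑ x, dref x * Real.exp (r₂ x / β))
    (d₁ d₂ : X → ℝ)
    (hd₁ : ∀ x, d₁ x = dref x * Real.exp (r₁ x / β) / Z₁)
    (hd₂ : ∀ x, d₂ x = dref x * Real.exp (r₂ x / β) / Z₂)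
    (hbt : ∀ x y, sigmoid (r₁ x - r₁ y) = sigmoid (r₂ x - r₂ y)) :
    (∃ c : ℝ, ∀ x, r₁ x - r₂ x = c) ∧ d₁ = d₂ :=
  bt_equivalent_rewards_same_occupancy_general dref r₁ r₂ β Z₁ Z₂ hZ₁ hZ₂ d₁ d₂ hd₁ hd₂ hbt
end
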